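/- arXiv:1809.03607 — 3 statements merged into one kernel-verified Lean document; each statement's English description precedes it below -/
import Mathlib

section
/- Let x ∈ Γ with g C²-smooth around x, let x* ∈ ℝⁿ, let λ ∈ Λ(x, x*), and let u ∈ K_Γ(x, x*). Then ⟨H(x, λ)u, u⟩ ≥ 0. -/
/- Common setting for tilt stability in second-order cone programming (SOCP):
   minimize f(x) subject to g(x) = (g₀(x), g_r(x)) ∈ Q,
   where Q is the second-order (Lorentz) cone in ℝ × ℝᵐ. -/

noncomputable section
open scoped RealInnerProductSpace Classical Topology
open Metric Set Filter

namespace SOCP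

abbrev E (n : ℕ) := EuclideanSpace ℝ (Fin n)

variable {n m : ℕ}

/-- Euclidean inner product on ℝ × ℝᵐ. -/
def pdot (a b : ℝ × E m) : ℝ := a.1 * b.1 + ⟪a.2, b.2⟫

/-- Euclidean norm on ℝ × ℝᵐ. -/
def pnorm (a : ℝ × E m) : ℝ := Real.sqrt (a.1 ^ 2 + ‖a.2‖ ^ 2)

/-- Membership in the second-order cone Q. -/
def inQ (q : ℝ × E m) : Prop := ‖q.2‖ ≤ q.1

/-- Membership in the dual cone Q*. -/
def inQdual (l : ℝ × E m) : Prop := ‖l.2‖ ≤ -l.1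

/-- Euclidean distance from q to the cone Q. -/
def distQ (q : ℝ × E m) : ℝ :=
  sInf {d : ℝ | ∃ p : ℝ × E m, inQ p ∧ d = pnorm (q.1 - p.1, q.2 - p.2)}

/-- The (limiting) normal cone to Q at a point q ∈ Q. -/
def NQ (q : ℝ × E m) : Set (ℝ × E m) :=
  if q = 0 then {l | inQdual l}
  else if ‖q.2‖ < q.1 then {0}
  else {l | ∃ α : ℝ, 0 ≤ α ∧ l = (-α, (α / ‖q.2‖) • q.2)}

variable (f g₀ : E n → ℝ) (gr : E n → E m)

/-- The constraint set Γ = g⁻¹(Q). -/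
def Gamma : Set (E n) := {x | ‖gr x‖ ≤ g₀ x}

/-- The Jacobian ∇g(x) applied to u, as an element of ℝ × ℝᵐ. -/
def Dg (x u : E n) : ℝ × E m := (fderiv ℝ g₀ x u, fderiv ℝ gr x u)

/-- Second derivative ∇²h(x)(v,u). -/
def D2 {G : Type*} [NormedAddCommGroup G] [NormedSpace ℝ G]
    (h : E n → G) (x v u : E n) : G :=
  fderiv ℝ (fderiv ℝ h) x v u

/-- Second derivative of g: ∇²g(x)(v,u) ∈ ℝ × ℝᵐ. -/
def D2g (x v u : E n) : ℝ × E m := (D2 g₀ x v u, D2 gr x v u)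

/-- The tangent cone T_Γ(x) (under MSCQ). -/
def TGamma (x : E n) : Set (E n) :=
  if (g₀ x, gr x) = (0 : ℝ × E m) then {u | inQ (Dg g₀ gr x u)}
  else if ‖gr x‖ < g₀ x then univ
  else {u | ⟪gr x, fderiv ℝ gr x u⟫ / ‖gr x‖ - fderiv ℝ g₀ x u ≤ 0}

/-- The critical cone K_Γ(x, x*). -/
def KGamma (x xs : E n) : Set (E n) := {u | u ∈ TGamma g₀ gr x ∧ ⟪xs, u⟫ = 0}

/-- The multiplier set Λ(x, x*) = {λ ∈ N_Q(g(x)) : ∇g(x)ᵀλ = x*}. -/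
def Lambda (x xs : E n) : Set (ℝ × E m) :=
  {l | l ∈ NQ (g₀ x, gr x) ∧ ∀ u : E n, pdot l (Dg g₀ gr x u) = ⟪xs, u⟫}

/-- Λ⁰(x, x*) = {0} if x* = 0, and Λ(x, x*) otherwise. -/
def Lambda0 (x xs : E n) : Set (ℝ × E m) :=
  if xs = 0 then {0} else Lambda g₀ gr x xs

/-- The curvature term ⟨H(x,λ)u, u⟩. -/
def Hq (x : E n) (l : ℝ × E m) (u : E n) : ℝ :=
  if ‖gr x‖ = g₀ x ∧ (g₀ x, gr x) ≠ (0 : ℝ × E m) then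
    (-l.1 / g₀ x) * (‖fderiv ℝ gr x u‖ ^ 2 - (fderiv ℝ g₀ x u) ^ 2)
  else 0

/-- ⟨∇²⟨λ, g⟩(x)u, u⟩. -/
def lagQuad (x : E n) (l : ℝ × E m) (u : E n) : ℝ :=
  l.1 * D2 g₀ x u u + ⟪l.2, D2 gr x u u⟫

/-- The directional multiplier set Λ(x, x*; u):
    maximizers of λ ↦ ⟨(∇²⟨λ,g⟩(x) + H(x,λ))u, u⟩ over Λ(x, x*). -/
def LambdaDir (x xs u : E n) : Set (ℝ × E m) :=
  {l | l ∈ Lambda g₀ gr x xs ∧ ∀ μ ∈ Lambda g₀ gr x xs,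
    lagQuad g₀ gr x μ u + Hq g₀ gr x μ u ≤ lagQuad g₀ gr x l u + Hq g₀ gr x l u}

/-- ⟨(∇²f(x) + ∇²⟨λ, g⟩(x))u, u⟩. -/
def quad (x : E n) (l : ℝ × E m) (u : E n) : ℝ :=
  D2 f x u u + lagQuad g₀ gr x l u

/-- ⟨(∇²f(x) + ∇²⟨λ, g⟩(x) + H(x,λ))u, u⟩. -/
def fullQuad (x : E n) (l : ℝ × E m) (u : E n) : ℝ :=
  D2 f x u u + lagQuad g₀ gr x l u + Hq g₀ gr x l u

/-- The metric subregularity constraint qualification with modulus σ. -/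
def MSCQ (xb : E n) (σ : ℝ) : Prop :=
  ∃ U ∈ 𝓝 xb, ∀ x ∈ U, infDist x (Gamma g₀ gr) ≤ σ * distQ (g₀ x, gr x)

/-- xb is a stationary point: Λ(xb, −∇f(xb)) ≠ ∅. -/
def Stationary (xb : E n) : Prop :=
  (Lambda g₀ gr xb (-gradient f xb)).Nonempty

/-- xb is a tilt-stable local minimizer of f over Γ with modulus κ: for some γ > 0, the
    argmin mapping M_γ is single-valued and κ-Lipschitz on a neighborhood of 0 with M_γ(0) = xb. -/
def TiltStable (xb : E n) (κ : ℝ) : Prop :=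
  ∃ γ > (0 : ℝ), ∃ V ∈ 𝓝 (0 : E n), ∃ M : E n → E n,
    M 0 = xb ∧
    (∀ v ∈ V, {x | x ∈ Gamma g₀ gr ∧ ‖x - xb‖ ≤ γ ∧
        ∀ y ∈ Gamma g₀ gr, ‖y - xb‖ ≤ γ → f x - ⟪v, x⟫ ≤ f y - ⟪v, y⟫} = {M v}) ∧
    ∀ v ∈ V, ∀ w ∈ V, ‖M v - M w‖ ≤ κ * ‖v - w‖

/-- The exact bound of tilt stability tilt(f + δ_Γ, xb). -/
def tiltBound (xb : E n) : ℝ :=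
  sInf {κ : ℝ | 0 < κ ∧ TiltStable f g₀ gr xb κ}

/-- The objective of the infimum defining ρ(u, λ, v). -/
def rhoObj (xb u : E n) (l : ℝ × E m) (v z : E n) : ℝ :=
  -l.1 * (‖fderiv ℝ gr xb z + D2 gr xb v u‖ ^ 2 -
    (fderiv ℝ g₀ xb z + D2 g₀ xb v u) ^ 2)

/-- The constraint of the infimum defining ρ(u, λ, v):
    ⟨λ, ∇g(xb)z + ∇²g(xb)(v,u)⟩ = 0. -/
def rhoCon (xb u : E n) (l : ℝ × E m) (v z : E n) : Prop :=
  l.1 * (fderiv ℝ g₀ xb z + D2 g₀ xb v u) +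
    ⟪l.2, fderiv ℝ gr xb z + D2 gr xb v u⟫ = 0

/-- The constraint set defining ρ(u, λ, v) is nonempty (ρ(u, λ, v) < ∞). -/
def rhoDom (xb u : E n) (l : ℝ × E m) (v : E n) : Prop :=
  ∃ z : E n, rhoCon g₀ gr xb u l v z

/-- The infimum function ρ(u, λ, v). -/
def rho (xb u : E n) (l : ℝ × E m) (v : E n) : ℝ :=
  sInf {r : ℝ | ∃ z : E n, rhoCon g₀ gr xb u l v z ∧ r = rhoObj g₀ gr xb u l v z}

/-- Membership (u, λ, v, w) ∈ Z. -/
def inZ (xb u : E n) (l : ℝ × E m) (v w : E n) : Prop :=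
  ‖u‖ = 1 ∧ l ∈ Lambda0 g₀ gr xb (-gradient f xb) ∧ ‖v‖ = 1 ∧
  pdot l (Dg g₀ gr xb u) = 0 ∧
  l.1 * (‖fderiv ℝ gr xb u‖ ^ 2 - (fderiv ℝ g₀ xb u) ^ 2) = 0 ∧
  Dg g₀ gr xb v = 0 ∧
  l ∈ NQ (Dg g₀ gr xb w + (2⁻¹ : ℝ) • D2g g₀ gr xb v v)

/-- The adjoint Jacobian ∇g(x)ᵀ applied to λ. -/
def DgAdj (x : E n) (l : ℝ × E m) : E n :=
  l.1 • gradient g₀ x + ContinuousLinearMap.adjoint (fderiv ℝ gr x) l.2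

/-- ∇ĝ(xb)ub where ĝ = (−g₀, g_r). -/
def ghat (xb ub : E n) : ℝ × E m := (-(fderiv ℝ g₀ xb ub), fderiv ℝ gr xb ub)

/-- The multiplier λ̄ = (‖∇f(xb)‖ / ‖∇g(xb)ᵀ∇ĝ(xb)ub‖)·∇ĝ(xb)ub. -/
def lambdaBar (xb ub : E n) : ℝ × E m :=
  (‖gradient f xb‖ / ‖DgAdj g₀ gr xb (ghat g₀ gr xb ub)‖) • ghat g₀ gr xb ub

/-- g is 2-regular at xb in the direction v. -/
def TwoRegular (xb v : E n) : Prop :=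
  ∀ p : ℝ × E m, ∃ z w : E n,
    Dg g₀ gr xb z + D2g g₀ gr xb v w = p ∧ Dg g₀ gr xb w = 0

/-- The constant χ₁. -/
def chi1 (xb : E n) : ℝ :=
  sInf {r : ℝ | ∃ u ∈ KGamma g₀ gr xb (-gradient f xb), ‖u‖ = 1 ∧
    ∃ l ∈ LambdaDir g₀ gr xb (-gradient f xb) u, r = quad f g₀ gr xb l u}

/-- The constant χ₂. -/
def chi2 (xb : E n) : ℝ :=
  sInf {r : ℝ | ∃ (u : E n) (l : ℝ × E m) (v w : E n),
    inZ f g₀ gr xb u l v w ∧ rhoDom g₀ gr xb u l v ∧ rho g₀ gr xb u l v = 0 ∧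
    r = quad f g₀ gr xb l u}

/-- The constant χ₃. -/
def chi3 (xb : E n) : ℝ :=
  sInf {r : ℝ | ∃ (u : E n) (l : ℝ × E m) (v w : E n),
    inZ f g₀ gr xb u l v w ∧
    Dg g₀ gr xb w + (2⁻¹ : ℝ) • D2g g₀ gr xb v v ≠ 0 ∧
    rhoDom g₀ gr xb u l v ∧
    r = quad f g₀ gr xb l u +
      rho g₀ gr xb u l v / (fderiv ℝ g₀ xb w + (2⁻¹ : ℝ) * D2 g₀ xb v v)}

/- On the boundary of Q away from the apex, λ = α·(−1, g_r(x)/‖g_r(x)‖) with α ≥ 0, so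
H(x, λ) = (α/‖g_r(x)‖)(∇g_rᵀ∇g_r − ∇g₀ᵀ∇g₀). Since ⟨x*, u⟩ = 0, the identity ∇g(x)ᵀλ = x* gives
α(⟨g_r(x)/‖g_r(x)‖, ∇g_r(x)u⟩ − ∇g₀(x)u) = 0; when α > 0 Cauchy–Schwarz then yields
|∇g₀(x)u| ≤ ‖∇g_r(x)u‖. -/

lemma sq_le_norm_sq_of_inner_div_norm_eq {F : Type*} [NormedAddCommGroup F]
    [InnerProductSpace ℝ F] {c b : F} {a : ℝ} (h : ⟪c, b⟫ / ‖c‖ = a) : a ^ 2 ≤ ‖b‖ ^ 2 := by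
  refine sq_le_sq.2 ?_
  rw [← h, abs_div, abs_norm, abs_norm]
  exact div_le_of_le_mul₀ (norm_nonneg c) (norm_nonneg b)
    ((abs_real_inner_le_norm c b).trans_eq (mul_comm _ _))

lemma NQ_of_norm_eq {q : ℝ × E m} (hq : q ≠ 0) (hbd : ‖q.2‖ = q.1) :
    NQ q = {l | ∃ α : ℝ, 0 ≤ α ∧ l = (-α, (α / ‖q.2‖) • q.2)} := by
  rw [NQ, if_neg hq, if_neg (hbd ▸ lt_irrefl _)]

lemma pdot_boundary_normal (α : ℝ) (c : E m) (p : ℝ × E m) :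
    pdot (-α, (α / ‖c‖) • c) p = α * (⟪c, p.2⟫ / ‖c‖ - p.1) := by
  rw [pdot, real_inner_smul_left]
  ring

theorem curvature_nonneg_on_critical_directions_general {n m : ℕ}
    (g₀ : E n → ℝ) (gr : E n → E m) (x : E n)
    (xs : E n)
    (l : ℝ × E m) (hl : l ∈ Lambda g₀ gr x xs)
    (u : E n) (hu : u ∈ KGamma g₀ gr x xs) :
    0 ≤ Hq g₀ gr x l u := by
  rw [Hq]
  split_ifs with hbd
  swap
  · rfl
  obtain ⟨hnorm, hne⟩ := hbd
  obtain ⟨hlN, hlx⟩ := hl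
  rw [NQ_of_norm_eq hne hnorm] at hlN
  obtain ⟨α, hα, rfl⟩ := hlN
  have hcompl := hlx u
  rw [hu.2, pdot_boundary_normal, Dg, mul_eq_zero] at hcompl
  rcases hcompl with rfl | htangent
  · simp
  · rw [← hnorm, neg_neg]
    exact mul_nonneg (div_nonneg hα (norm_nonneg _))
      (sub_nonneg.2 (sq_le_norm_sq_of_inner_div_norm_eq (sub_eq_zero.1 htangent)))

/-- Lemma: curvature mapping on critical directions.
For x ∈ Γ, λ ∈ Λ(x, x*), and u ∈ K_Γ(x, x*) one has ⟨H(x,λ)u, u⟩ ≥ 0. -/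
theorem curvature_nonneg_on_critical_directions {n m : ℕ}
    (g₀ : E n → ℝ) (gr : E n → E m) (x : E n)
    (hg₀ : ContDiffAt ℝ 2 g₀ x) (hgr : ContDiffAt ℝ 2 gr x)
    (hx : x ∈ Gamma g₀ gr) (xs : E n)
    (l : ℝ × E m) (hl : l ∈ Lambda g₀ gr x xs)
    (u : E n) (hu : u ∈ KGamma g₀ gr x xs) :
    0 ≤ Hq g₀ gr x l u :=
  curvature_nonneg_on_critical_directions_general g₀ gr x xs l hl u hu

end SOCP
end
end

section
/- Assume MSCQ holds at x̄ ∈ Γ with modulus σ > 0 and f is C²-smooth around x̄. Let x_k ∈ Γ with x_k → x̄, x_k* → 0, λᵏ → λ̃, and u_k → ũ be convergent sequences such that for all k: λᵏ ∈ Λ(x_k, x_k* − ∇f(x_k); u_k) with ‖λᵏ‖ ≤ σ‖x_k* − ∇f(x_k)‖, u_k ∈ K_Γ(x_k, x_k* − ∇f(x_k)) with ‖u_k‖ = 1, and limsup_{k→∞} ⟨H(x_k, λᵏ)u_k, u_k⟩ < ∞. Then: λ̃ ∈ Λ(x̄, −∇f(x̄)) with ‖λ̃‖ ≤ σ‖∇f(x̄)‖,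 λ̃ ∈ Λ⁰(x̄, −∇f(x̄)), ‖ũ‖ = 1, ⟨λ̃, ∇g(x̄)ũ⟩ = 0, and λ̃₀·(‖∇g_r(x̄)ũ‖² − (∇g₀(x̄)ũ)²) = 0. -/
/-! The multiplier part is closedness: `Q*` is closed and `λ ↦ ∇g(x)ᵀλ` depends continuously on
`x`, so the limit `λ̃` is a multiplier at `x̄`, where `g(x̄) = 0` makes the normal cone all of
`Q*`; the norm bound passes to the limit and forces `λ̃ = 0` when `∇f(x̄) = 0`. Complementarity
gives `⟨λ̃, ∇g(x̄)ũ⟩ = 0`, so if `λ̃₀ < 0` then `∇g(x̄)ũ ∉ ± int Q`. If moreover `∇g(x̄)ũ ∉ ±Q`,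
then for large `k` the points `g(xₖ)` lie on `bd Q \ {0}` and `⟨H(xₖ, λᵏ)uₖ, uₖ⟩` behaves like
`c / g₀(xₖ)` with `c > 0` and `g₀(xₖ) → 0`, contradicting the `limsup` bound. -/

/- Common setting for tilt stability in second-order cone programming (SOCP):
   minimize f(x) subject to g(x) = (g₀(x), g_r(x)) ∈ Q,
   where Q is the second-order (Lorentz) cone in ℝ × ℝᵐ. -/

noncomputable section
open scoped RealInnerProductSpace Classical Topology
open Metric Set Filter

namespace SOCP

variable {n m : ℕ}

variable (f g₀ : E n → ℝ) (gr : E n → E m)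

theorem _root_.tendsto_clm_apply {𝕜 E F ι : Type*} [NontriviallyNormedField 𝕜]
    [NormedAddCommGroup E] [NormedSpace 𝕜 E] [NormedAddCommGroup F] [NormedSpace 𝕜 F]
    {l : Filter ι} {A : ι → E →L[𝕜] F} {A₀ : E →L[𝕜] F} {v : ι → E} {v₀ : E}
    (hA : Tendsto A l (𝓝 A₀)) (hv : Tendsto v l (𝓝 v₀)) :
    Tendsto (fun i => A i (v i)) l (𝓝 (A₀ v₀)) :=
  (isBoundedBilinearMap_apply.continuous.tendsto _).comp (hA.prodMk_nhds hv)

theorem _root_.ContDiffAt.continuousAt_gradient {F : Type*} [NormedAddCommGroup F]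
    [InnerProductSpace ℝ F] [CompleteSpace F] {h : F → ℝ} {x₀ : F} {k : WithTop ℕ∞}
    (hh : ContDiffAt ℝ k h x₀) (hk : k ≠ 0) : ContinuousAt (gradient h) x₀ :=
  (InnerProductSpace.toDual ℝ F).symm.continuous.continuousAt.comp
    (hh.continuousAt_fderiv hk)

theorem continuous_pnorm : Continuous (pnorm : ℝ × E m → ℝ) := by
  unfold pnorm
  fun_prop

theorem pnorm_eq_zero_iff {a : ℝ × E m} : pnorm a = 0 ↔ a = 0 := by
  rw [pnorm, Real.sqrt_eq_zero (by positivity),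
    add_eq_zero_iff_of_nonneg (sq_nonneg _) (sq_nonneg _)]
  simp [Prod.ext_iff]

theorem isClosed_setOf_inQdual : IsClosed {l : ℝ × E m | inQdual l} :=
  isClosed_le continuous_snd.norm continuous_fst.neg

theorem inQdual_of_mem_NQ {q l : ℝ × E m} (hl : l ∈ NQ q) (hq : inQ q) : inQdual l := by
  unfold NQ at hl
  split_ifs at hl with h0 hint
  · exact hl
  · rw [Set.mem_singleton_iff.1 hl]
    simp [inQdual]
  · obtain ⟨α, hα, rfl⟩ := hl
    have heq : ‖q.2‖ = q.1 := le_antisymm hq (not_lt.1 hint)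
    have hpos : 0 < ‖q.2‖ := by
      refine norm_pos_iff.2 fun h2 => h0 (Prod.ext ?_ h2)
      rw [← heq, h2, norm_zero, Prod.fst_zero]
    show ‖(α / ‖q.2‖) • q.2‖ ≤ -(-α)
    rw [norm_smul, Real.norm_of_nonneg (div_nonneg hα hpos.le), div_mul_cancel₀ _ hpos.ne',
      neg_neg]

/-- A multiplier with `l.1 < 0` in the dual cone lies in the interior of `Q*`, so a vector
orthogonal to it cannot lie in `int Q ∪ -int Q`. -/
theorem sq_fst_le_of_pdot_eq_zero {l q : ℝ × E m} (hl : inQdual l) (hl1 : l.1 < 0)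
    (hq : pdot l q = 0) : q.1 ^ 2 ≤ ‖q.2‖ ^ 2 := by
  have habs : -l.1 * |q.1| ≤ -l.1 * ‖q.2‖ :=
    calc -l.1 * |q.1| = |-l.1 * q.1| := by rw [abs_mul, abs_of_pos (neg_pos.2 hl1)]
      _ = |⟪l.2, q.2⟫| := by
          unfold pdot at hq
          rw [show -l.1 * q.1 = ⟪l.2, q.2⟫ by linarith]
      _ ≤ ‖l.2‖ * ‖q.2‖ := abs_real_inner_le_norm _ _
      _ ≤ -l.1 * ‖q.2‖ := mul_le_mul_of_nonneg_right hl (norm_nonneg _)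
  rw [sq_le_sq, abs_norm]
  exact le_of_mul_le_mul_left habs (neg_pos.2 hl1)

section Multipliers

variable {g₀ gr}

theorem mem_Lambda0_of_pnorm_le {x xs : E n} {l : ℝ × E m} {σ : ℝ}
    (hl : l ∈ Lambda g₀ gr x xs) (hσ : pnorm l ≤ σ * ‖xs‖) : l ∈ Lambda0 g₀ gr x xs := by
  unfold Lambda0
  split_ifs with hxs
  · rw [hxs, norm_zero, mul_zero] at hσ
    exact pnorm_eq_zero_iff.1 (le_antisymm hσ (Real.sqrt_nonneg _))
  · exact hl

theorem mem_Lambda_of_tendsto {ι : Type*} {l : Filter ι} [l.NeBot] {xb y : E n}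
    {lt : ℝ × E m} {x ys : ι → E n} {lam : ι → ℝ × E m}
    (hDg₀ : ContinuousAt (fderiv ℝ g₀) xb) (hDgr : ContinuousAt (fderiv ℝ gr) xb)
    (hb : (g₀ xb, gr xb) = 0) (hxΓ : ∀ i, x i ∈ Gamma g₀ gr) (hx : Tendsto x l (𝓝 xb))
    (hys : Tendsto ys l (𝓝 y)) (hlam : Tendsto lam l (𝓝 lt))
    (hmem : ∀ i, lam i ∈ Lambda g₀ gr (x i) (ys i)) : lt ∈ Lambda g₀ gr xb y := by
  refine ⟨?_, fun v => ?_⟩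
  · rw [NQ, if_pos hb]
    have hdual : ∀ i, inQdual (lam i) := fun i => inQdual_of_mem_NQ (hmem i).1 (hxΓ i)
    exact isClosed_setOf_inQdual.mem_of_tendsto hlam (Eventually.of_forall hdual)
  · have hpdot : Tendsto (fun i => pdot (lam i) (Dg g₀ gr (x i) v)) l
        (𝓝 (pdot lt (Dg g₀ gr xb v))) := by
      simp only [pdot, Dg]
      exact (hlam.fst_nhds.mul (tendsto_clm_apply (hDg₀.tendsto.comp hx) tendsto_const_nhds)).add
        (hlam.snd_nhds.inner (tendsto_clm_apply (hDgr.tendsto.comp hx) tendsto_const_nhds))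
    exact tendsto_nhds_unique (hpdot.congr fun i => (hmem i).2 v) (hys.inner tendsto_const_nhds)

theorem boundary_of_fst_neg_of_sq_lt {x u : E n} {l : ℝ × E m} (hx : x ∈ Gamma g₀ gr)
    (hl : l ∈ NQ (g₀ x, gr x)) (hu : u ∈ TGamma g₀ gr x) (hl1 : l.1 < 0)
    (hlt : fderiv ℝ g₀ x u ^ 2 < ‖fderiv ℝ gr x u‖ ^ 2) :
    0 < g₀ x ∧ ‖gr x‖ = g₀ x := by
  unfold NQ at hl
  unfold TGamma at hu
  by_cases h0 : (g₀ x, gr x) = 0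
  · rw [if_pos h0] at hu
    have hu' : ‖fderiv ℝ gr x u‖ ≤ fderiv ℝ g₀ x u := hu
    nlinarith [norm_nonneg (fderiv ℝ gr x u)]
  rw [if_neg h0] at hl
  by_cases hint : ‖gr x‖ < g₀ x
  · rw [if_pos hint, Set.mem_singleton_iff] at hl
    simp [hl] at hl1
  have heq : ‖gr x‖ = g₀ x := le_antisymm hx (not_lt.1 hint)
  refine ⟨lt_of_le_of_ne (heq ▸ norm_nonneg _) fun hg => h0 ?_, heq⟩
  rw [← hg, norm_eq_zero.1 (heq.trans hg.symm)]
  rfl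

theorem Hq_of_boundary {x u : E n} {l : ℝ × E m} (hpos : 0 < g₀ x) (heq : ‖gr x‖ = g₀ x) :
    Hq g₀ gr x l u = -l.1 / g₀ x * (‖fderiv ℝ gr x u‖ ^ 2 - fderiv ℝ g₀ x u ^ 2) :=
  if_pos ⟨heq, fun h => hpos.ne' (congrArg Prod.fst h)⟩

/-- If `∇g(x̄)ũ ∉ ±Q` while `λ₀` stays negative, then `g(xₖ)` must sit on `bd Q \ {0}`
and `⟨H(xₖ, λᵏ)uₖ, uₖ⟩` carries the factor `1 / g₀(xₖ) → ∞`. -/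
theorem sq_norm_fderiv_le_of_bddAbove_Hq {ι : Type*} {l : Filter ι} [l.NeBot] {xb ut : E n}
    {lt : ℝ × E m} {x u : ι → E n} {lam : ι → ℝ × E m}
    (hg₀ : ContinuousAt g₀ xb) (hDg₀ : ContinuousAt (fderiv ℝ g₀) xb)
    (hDgr : ContinuousAt (fderiv ℝ gr) xb) (hb0 : g₀ xb = 0) (hxΓ : ∀ i, x i ∈ Gamma g₀ gr)
    (hx : Tendsto x l (𝓝 xb)) (hlam : Tendsto lam l (𝓝 lt)) (hu : Tendsto u l (𝓝 ut))
    (hNQ : ∀ i, lam i ∈ NQ (g₀ (x i), gr (x i))) (hT : ∀ i, u i ∈ TGamma g₀ gr (x i))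
    (hbdd : ∃ C, ∀ i, Hq g₀ gr (x i) (lam i) (u i) ≤ C) (hl1 : lt.1 < 0) :
    ‖fderiv ℝ gr xb ut‖ ^ 2 ≤ fderiv ℝ g₀ xb ut ^ 2 := by
  by_contra! hlt
  obtain ⟨C, hC⟩ := hbdd
  set s : ι → ℝ := fun i => ‖fderiv ℝ gr (x i) (u i)‖ ^ 2 - fderiv ℝ g₀ (x i) (u i) ^ 2
  have hs : Tendsto s l (𝓝 (‖fderiv ℝ gr xb ut‖ ^ 2 - fderiv ℝ g₀ xb ut ^ 2)) :=
    ((tendsto_clm_apply (hDgr.tendsto.comp hx) hu).norm.pow 2).sub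
      ((tendsto_clm_apply (hDg₀.tendsto.comp hx) hu).pow 2)
  have hnum : Tendsto (fun i => -(lam i).1 * s i) l
      (𝓝 (-lt.1 * (‖fderiv ℝ gr xb ut‖ ^ 2 - fderiv ℝ g₀ xb ut ^ 2))) :=
    hlam.fst_nhds.neg.mul hs
  have hbd : ∀ᶠ i in l, 0 < g₀ (x i) ∧ ‖gr (x i)‖ = g₀ (x i) :=
    ((hlam.fst_nhds.eventually_lt_const hl1).and (hs.eventually_const_lt (sub_pos.2 hlt))).mono
      fun i hi => boundary_of_fst_neg_of_sq_lt (hxΓ i) (hNQ i) (hT i) hi.1 (sub_pos.1 hi.2)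
  have hg0 : Tendsto (fun i => g₀ (x i)) l (𝓝[>] 0) :=
    tendsto_nhdsWithin_iff.2 ⟨hb0 ▸ hg₀.tendsto.comp hx, hbd.mono fun i hi => hi.1⟩
  have hblow : Tendsto (fun i => -(lam i).1 * s i * (g₀ (x i))⁻¹) l atTop :=
    hnum.pos_mul_atTop (mul_pos (neg_pos.2 hl1) (sub_pos.2 hlt))
      (tendsto_inv_nhdsGT_zero.comp hg0)
  obtain ⟨i, hiC, hi⟩ := ((hblow.eventually_gt_atTop C).and hbd).exists
  have hHq := Hq_of_boundary (l := lam i) (u := u i) hi.1 hi.2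
  rw [div_mul_eq_mul_div, div_eq_mul_inv] at hHq
  linarith [hC i]

end Multipliers

theorem limiting_procedure_general {n m : ℕ}
    (f g₀ : E n → ℝ) (gr : E n → E m) (xb : E n) (σ : ℝ)
    (hf : ContDiffAt ℝ 2 f xb) (hg₀ : ContDiffAt ℝ 2 g₀ xb) (hgr : ContDiffAt ℝ 2 gr xb)
    (hb0 : g₀ xb = 0) (hbr : gr xb = 0)
    (x xs : ℕ → E n) (lam : ℕ → ℝ × E m) (u : ℕ → E n)
    (hxΓ : ∀ k, x k ∈ Gamma g₀ gr)
    (hx : Tendsto x atTop (𝓝 xb)) (hxs : Tendsto xs atTop (𝓝 0))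
    (ltilde : ℝ × E m) (hlam : Tendsto lam atTop (𝓝 ltilde))
    (ut : E n) (hu : Tendsto u atTop (𝓝 ut))
    (hlmem : ∀ k, lam k ∈ LambdaDir g₀ gr (x k) (xs k - gradient f (x k)) (u k))
    (hlnorm : ∀ k, pnorm (lam k) ≤ σ * ‖xs k - gradient f (x k)‖)
    (humem : ∀ k, u k ∈ KGamma g₀ gr (x k) (xs k - gradient f (x k)))
    (hunorm : ∀ k, ‖u k‖ = 1)
    (hbdd : ∃ C : ℝ, ∀ k, Hq g₀ gr (x k) (lam k) (u k) ≤ C) :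
    ltilde ∈ Lambda g₀ gr xb (-gradient f xb) ∧
    pnorm ltilde ≤ σ * ‖gradient f xb‖ ∧
    ltilde ∈ Lambda0 g₀ gr xb (-gradient f xb) ∧
    ‖ut‖ = 1 ∧
    pdot ltilde (Dg g₀ gr xb ut) = 0 ∧
    ltilde.1 * (‖fderiv ℝ gr xb ut‖ ^ 2 - (fderiv ℝ g₀ xb ut) ^ 2) = 0 := by
  have hDg₀ := hg₀.continuousAt_fderiv two_ne_zero
  have hDgr := hgr.continuousAt_fderiv two_ne_zero
  have hb : (g₀ xb, gr xb) = 0 := by rw [hb0, hbr]; rfl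
  have hys : Tendsto (fun k => xs k - gradient f (x k)) atTop (𝓝 (-gradient f xb)) := by
    simpa using hxs.sub ((hf.continuousAt_gradient two_ne_zero).tendsto.comp hx)
  have hΛ : ltilde ∈ Lambda g₀ gr xb (-gradient f xb) :=
    mem_Lambda_of_tendsto hDg₀ hDgr hb hxΓ hx hys hlam fun k => (hlmem k).1
  have hnorm : pnorm ltilde ≤ σ * ‖gradient f xb‖ := by
    simpa using le_of_tendsto_of_tendsto' ((continuous_pnorm.tendsto _).comp hlam)
      (tendsto_const_nhds.mul hys.norm) hlnorm
  have hcompl : pdot ltilde (Dg g₀ gr xb ut) = 0 := by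
    rw [hΛ.2 ut]
    exact tendsto_nhds_unique (hys.inner hu)
      (tendsto_const_nhds.congr fun k => ((humem k).2).symm)
  have hdual : inQdual ltilde := inQdual_of_mem_NQ hΛ.1 (by simp [inQ, hb0, hbr])
  refine ⟨hΛ, hnorm, mem_Lambda0_of_pnorm_le hΛ (by rwa [norm_neg]),
    tendsto_nhds_unique hu.norm (by simp [hunorm]), hcompl, ?_⟩
  rcases (neg_nonneg.1 ((norm_nonneg _).trans hdual)).eq_or_lt with hl1 | hl1
  · rw [hl1, zero_mul]
  refine mul_eq_zero_of_right _ (sub_eq_zero.2 (le_antisymm ?_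
    (sq_fst_le_of_pdot_eq_zero hdual hl1 hcompl)))
  exact sq_norm_fderiv_le_of_bddAbove_Hq hg₀.continuousAt hDg₀ hDgr hb0 hxΓ hx hlam hu
    (fun k => (hlmem k).1.1) (fun k => (humem k).1) hbdd hl1

/-- Lemma: limiting procedure. -/
theorem limiting_procedure {n m : ℕ}
    (f g₀ : E n → ℝ) (gr : E n → E m) (xb : E n) (σ : ℝ) (hσ : 0 < σ)
    (hf : ContDiffAt ℝ 2 f xb) (hg₀ : ContDiffAt ℝ 2 g₀ xb) (hgr : ContDiffAt ℝ 2 gr xb)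
    (hb0 : g₀ xb = 0) (hbr : gr xb = 0)
    (hmscq : MSCQ g₀ gr xb σ)
    (x xs : ℕ → E n) (lam : ℕ → ℝ × E m) (u : ℕ → E n)
    (hxΓ : ∀ k, x k ∈ Gamma g₀ gr)
    (hx : Tendsto x atTop (𝓝 xb)) (hxs : Tendsto xs atTop (𝓝 0))
    (ltilde : ℝ × E m) (hlam : Tendsto lam atTop (𝓝 ltilde))
    (ut : E n) (hu : Tendsto u atTop (𝓝 ut))
    (hlmem : ∀ k, lam k ∈ LambdaDir g₀ gr (x k) (xs k - gradient f (x k)) (u k))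
    (hlnorm : ∀ k, pnorm (lam k) ≤ σ * ‖xs k - gradient f (x k)‖)
    (humem : ∀ k, u k ∈ KGamma g₀ gr (x k) (xs k - gradient f (x k)))
    (hunorm : ∀ k, ‖u k‖ = 1)
    (hbdd : ∃ C : ℝ, ∀ k, Hq g₀ gr (x k) (lam k) (u k) ≤ C) :
    ltilde ∈ Lambda g₀ gr xb (-gradient f xb) ∧
    pnorm ltilde ≤ σ * ‖gradient f xb‖ ∧
    ltilde ∈ Lambda0 g₀ gr xb (-gradient f xb) ∧
    ‖ut‖ = 1 ∧
    pdot ltilde (Dg g₀ gr xb ut) = 0 ∧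
    ltilde.1 * (‖fderiv ℝ gr xb ut‖ ^ 2 - (fderiv ℝ g₀ xb ut) ^ 2) = 0 :=
  limiting_procedure_general f g₀ gr xb σ hf hg₀ hgr hb0 hbr x xs lam u hxΓ hx hxs ltilde hlam ut hu
    hlmem hlnorm humem hunorm hbdd

end SOCP
end
end

section
/- Let x̄ ∈ Γ with g(x̄) = 0, let Λ(x̄, −∇f(x̄)) ≠ ∅, and suppose there exists ū ∈ K_Γ(x̄, −∇f(x̄)) with ∇g(x̄)ū ≠ 0. Then Λ⁰(x̄, −∇f(x̄)) = {λ̄}, where λ̄ := (‖∇f(x̄)‖/‖∇g(x̄)ᵀ∇ĝ(x̄)ū‖)·∇ĝ(x̄)ū with ĝ := (−g₀, g_r). In particular, if ∇f(x̄) ≠ 0 then the whole multiplier set Λ(x̄, −∇f(x̄)) is the singleton {λ̄}. -/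
/-! A multiplier `λ ∈ Q*` orthogonal to the nonzero vector `q = ∇g(x̄)ū ∈ Q` forces equality in
`⟪λ_r, q_r⟫ ≤ ‖λ_r‖ ‖q_r‖ ≤ -λ₀ ‖q_r‖ ≤ -λ₀ q₀`, so `λ = t • (-q₀, q_r) = t • ∇ĝ(x̄)ū` with `t ≥ 0`.
Applying `∇g(x̄)ᵀ` gives `t • ∇g(x̄)ᵀ∇ĝ(x̄)ū = -∇f(x̄)`, and taking norms determines `t`. -/

/- Common setting for tilt stability in second-order cone programming (SOCP):
   minimize f(x) subject to g(x) = (g₀(x), g_r(x)) ∈ Q,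
   where Q is the second-order (Lorentz) cone in ℝ × ℝᵐ. -/

noncomputable section
open scoped RealInnerProductSpace Classical Topology
open Metric Set Filter

namespace SOCP

variable {n m : ℕ}

variable (f g₀ : E n → ℝ) (gr : E n → E m)

theorem exists_nonneg_smul_reflect_of_inner_eq_zero {F : Type*} [NormedAddCommGroup F]
    [InnerProductSpace ℝ F] {l q : ℝ × F} (hl : ‖l.2‖ ≤ -l.1) (hq : ‖q.2‖ ≤ q.1)
    (hlq : l.1 * q.1 + ⟪l.2, q.2⟫ = 0) (hq0 : q ≠ 0) :
    ∃ t : ℝ, 0 ≤ t ∧ l = t • (-q.1, q.2) := by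
  have hq1 : 0 < q.1 := by
    refine lt_of_le_of_ne (le_trans (norm_nonneg _) hq) fun h => hq0 ?_
    have : q.2 = 0 := norm_le_zero_iff.1 (h ▸ hq)
    exact Prod.ext h.symm this
  have hs : 0 ≤ -l.1 := le_trans (norm_nonneg _) hl
  have hcs : ⟪l.2, q.2⟫ ≤ ‖l.2‖ * ‖q.2‖ := real_inner_le_norm _ _
  have h1 : ‖l.2‖ * ‖q.2‖ ≤ -l.1 * ‖q.2‖ := mul_le_mul_of_nonneg_right hl (norm_nonneg _)
  have h2 : -l.1 * ‖q.2‖ ≤ -l.1 * q.1 := mul_le_mul_of_nonneg_left hq hs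
  refine ⟨-l.1 / q.1, div_nonneg hs hq1.le, ?_⟩
  rcases hs.eq_or_lt with hs0 | hspos
  · have hl2 : l.2 = 0 := norm_le_zero_iff.1 (hs0 ▸ hl)
    ext <;> simp [hl2, show l.1 = 0 by linarith]
  have hq2 : ‖q.2‖ = q.1 := le_antisymm hq (le_of_mul_le_mul_left (by linarith) hspos)
  have hl2 : ‖l.2‖ = -l.1 := by
    rcases (norm_nonneg q.2).eq_or_lt with h0 | h0
    · linarith
    · exact le_antisymm hl (le_of_mul_le_mul_right (by linarith) h0)
  have hpar : q.1 • l.2 = -l.1 • q.2 := by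
    rw [← hq2, ← hl2]
    exact inner_eq_norm_mul_iff_real.1 (by linarith)
  ext
  · simp only [Prod.smul_fst, smul_eq_mul]
    field_simp
  · change l.2 = (-l.1 / q.1) • q.2
    rw [div_eq_inv_mul, mul_smul, ← hpar, smul_smul, inv_mul_cancel₀ hq1.ne', one_smul]

theorem eq_norm_div_norm_of_smul_eq {F : Type*} [NormedAddCommGroup F] [NormedSpace ℝ F]
    {t : ℝ} {v w : F} (ht : 0 ≤ t) (hw : w ≠ 0) (h : t • v = w) : t = ‖w‖ / ‖v‖ := by
  have hv : v ≠ 0 := by rintro rfl; exact hw (by simp [← h])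
  rw [← h, norm_smul, Real.norm_of_nonneg ht, mul_div_cancel_right₀ _ (norm_ne_zero_iff.2 hv)]

section Multipliers

variable (f g₀ : E n → ℝ) (gr : E n → E m)

theorem pdot_Dg (x : E n) (p : ℝ × E m) (u : E n) :
    pdot p (Dg g₀ gr x u) = ⟪DgAdj g₀ gr x p, u⟫ := by
  simp only [pdot, Dg, DgAdj, inner_add_left, real_inner_smul_left, gradient,
    InnerProductSpace.toDual_symm_apply, ContinuousLinearMap.adjoint_inner_left]

theorem DgAdj_smul (x : E n) (t : ℝ) (p : ℝ × E m) :
    DgAdj g₀ gr x (t • p) = t • DgAdj g₀ gr x p := by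
  simp [DgAdj, smul_add, smul_smul]

theorem DgAdj_eq_of_mem_Lambda {x xs : E n} {l : ℝ × E m} (hl : l ∈ Lambda g₀ gr x xs) :
    DgAdj g₀ gr x l = xs :=
  ext_inner_right ℝ fun u => (pdot_Dg g₀ gr x l u).symm.trans (hl.2 u)

theorem eq_lambdaBar_of_mem_Lambda {xb ub : E n}
    (hb0 : g₀ xb = 0) (hbr : gr xb = 0) (hub : ub ∈ KGamma g₀ gr xb (-gradient f xb))
    (hubne : Dg g₀ gr xb ub ≠ 0) (hgrad : gradient f xb ≠ 0) {l : ℝ × E m}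
    (hl : l ∈ Lambda g₀ gr xb (-gradient f xb)) : l = lambdaBar f g₀ gr xb ub := by
  have hg0 : (g₀ xb, gr xb) = (0 : ℝ × E m) := by rw [hb0, hbr]; rfl
  have hdual : inQdual l := by simpa [NQ, hg0] using hl.1
  have hQ : inQ (Dg g₀ gr xb ub) := by simpa [TGamma, hg0] using hub.1
  have horth : pdot l (Dg g₀ gr xb ub) = 0 := (hl.2 ub).trans hub.2
  obtain ⟨t, ht, rfl⟩ := exists_nonneg_smul_reflect_of_inner_eq_zero hdual hQ horth hubne
  have hadj : t • DgAdj g₀ gr xb (ghat g₀ gr xb ub) = -gradient f xb := by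
    rw [← DgAdj_smul]; exact DgAdj_eq_of_mem_Lambda g₀ gr hl
  rw [lambdaBar, ← norm_neg, ← eq_norm_div_norm_of_smul_eq ht (neg_ne_zero.2 hgrad) hadj]
  rfl

end Multipliers

theorem multiplier_unique_out_of_kernel_general {n m : ℕ}
    (f g₀ : E n → ℝ) (gr : E n → E m) (xb : E n)
    (hb0 : g₀ xb = 0) (hbr : gr xb = 0)
    (hstat : Stationary f g₀ gr xb)
    (ub : E n) (hub : ub ∈ KGamma g₀ gr xb (-gradient f xb))
    (hubne : Dg g₀ gr xb ub ≠ 0) :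
    Lambda0 g₀ gr xb (-gradient f xb) = {lambdaBar f g₀ gr xb ub} ∧
    (gradient f xb ≠ 0 →
      Lambda g₀ gr xb (-gradient f xb) = {lambdaBar f g₀ gr xb ub}) := by
  have hLambda : gradient f xb ≠ 0 →
      Lambda g₀ gr xb (-gradient f xb) = {lambdaBar f g₀ gr xb ub} := fun hgrad =>
    Set.eq_singleton_iff_nonempty_unique_mem.2
      ⟨hstat, fun _ hl => eq_lambdaBar_of_mem_Lambda f g₀ gr hb0 hbr hub hubne hgrad hl⟩
  refine ⟨?_, hLambda⟩
  by_cases hgrad : gradient f xb = 0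
  · simp [Lambda0, lambdaBar, hgrad]
  · rw [Lambda0, if_neg (neg_ne_zero.2 hgrad)]
    exact hLambda hgrad

/-- uniqueness of the multiplier in the out-of-kernel case:
Λ⁰(xb, −∇f(xb)) = {λ̄}, and Λ(xb, −∇f(xb)) = {λ̄} whenever ∇f(xb) ≠ 0. -/
theorem multiplier_unique_out_of_kernel {n m : ℕ}
    (f g₀ : E n → ℝ) (gr : E n → E m) (xb : E n)
    (hf : ContDiffAt ℝ 2 f xb) (hg₀ : ContDiffAt ℝ 2 g₀ xb) (hgr : ContDiffAt ℝ 2 gr xb)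
    (hb0 : g₀ xb = 0) (hbr : gr xb = 0)
    (hstat : Stationary f g₀ gr xb)
    (ub : E n) (hub : ub ∈ KGamma g₀ gr xb (-gradient f xb))
    (hubne : Dg g₀ gr xb ub ≠ 0) :
    Lambda0 g₀ gr xb (-gradient f xb) = {lambdaBar f g₀ gr xb ub} ∧
    (gradient f xb ≠ 0 →
      Lambda g₀ gr xb (-gradient f xb) = {lambdaBar f g₀ gr xb ub}) :=
  multiplier_unique_out_of_kernel_general f g₀ gr xb hb0 hbr hstat ub hub hubne

end SOCP
end
end
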